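/- For every real ε with 0 < ε < 1/2, the space W ∩ X = {(z,w) ∈ (ℂ³∖{0}) × (ℂ³∖{0}) : z·w = 0, ‖z‖² + ‖w‖² = 1, and (‖z‖² < ε or ‖w‖² < ε)}, with the subspace topology, is homotopy equivalent to the disjoint union of two copies of SU(3). -/

import Mathlib

/-- `ℂ³` with its Hermitian norm. -/
noncomputable abbrev C3 := EuclideanSpace ℂ (Fin 3)

/-- The bilinear dot product `z·w = z₁w₁ + z₂w₂ + z₃w₃` (no complex conjugation). -/
noncomputable def dotProd (z w : C3) : ℂ := ∑ i, z i * w i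

/-- The special unitary group SU(3). -/
noncomputable abbrev SU3 := Matrix.specialUnitaryGroup (Fin 3) ℂ

/-- The intersection `W ∩ X`, depending on `ε`. -/
def spaceWX (ε : ℝ) : Set (C3 × C3) :=
  {p | p.1 ≠ 0 ∧ p.2 ≠ 0 ∧ dotProd p.1 p.2 = 0 ∧ ‖p.1‖ ^ 2 + ‖p.2‖ ^ 2 = 1 ∧
    (‖p.1‖ ^ 2 < ε ∨ ‖p.2‖ ^ 2 < ε)}

/-!
Since `‖z‖² + ‖w‖² = 1` and `ε < 1/2`, exactly one of `‖z‖²`, `‖w‖²` is below `ε`, so the space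
splits into two clopen halves exchanged by `(z, w) ↦ (w, z)`. On the half where `‖z‖² < ε`, a point
is determined by `t = ‖z‖² ∈ (0, ε)`, a contractible factor, and the unit pair
`(z / ‖z‖, w / ‖w‖)` with `z·w = 0`. Such a pair `(u, w)` is the same as two Hermitian-orthonormal
rows `u, w̄`, and these extend uniquely to a matrix of `SU(3)`, with third row `conj (u × w̄)`.
-/

open Matrix WithLp
open scoped ContinuousMap

noncomputable section

theorem Homeomorph.nonempty_homotopyEquiv_of_prod_contractible {X Y C : Type*}
    [TopologicalSpace X] [TopologicalSpace Y] [TopologicalSpace C] [ContractibleSpace C]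
    (e : X ≃ₜ C × Y) : Nonempty (X ≃ₕ Y) := by
  obtain ⟨h⟩ := ContractibleSpace.hequiv_unit C
  exact ⟨e.toHomotopyEquiv.trans
    ((h.prodCongr (.refl Y)).trans (Homeomorph.punitProd Y).toHomotopyEquiv)⟩

def Homeomorph.sumComplOfIsClopen {X : Type*} [TopologicalSpace X] {s : Set X}
    [DecidablePred (· ∈ s)] (hs : IsClopen s) : s ⊕ (sᶜ : Set X) ≃ₜ X :=
  (Equiv.sumCompl (· ∈ s)).toHomeomorphOfContinuousOpen
    (continuous_subtype_val.sumElim continuous_subtype_val)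
    (hs.isOpen.isOpenMap_subtype_val.sumElim hs.compl.isOpen.isOpenMap_subtype_val)

namespace Matrix

variable {R : Type*} [CommRing R] [StarRing R]

theorem star_cross (a b : Fin 3 → R) : star (a ⨯₃ b) = star a ⨯₃ star b := by
  ext i; fin_cases i <;> simp [cross_apply]

theorem star_cross_dotProduct_cross {a c : Fin 3 → R} (ha : a ⬝ᵥ star a = 1)
    (hc : c ⬝ᵥ star c = 1) (hac : a ⬝ᵥ star c = 0) : star (a ⨯₃ c) ⬝ᵥ (a ⨯₃ c) = 1 := by
  have hca : c ⬝ᵥ star a = 0 := by rw [dotProduct_star, hac, star_zero]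
  rw [star_cross, cross_dot_cross, dotProduct_comm (star a), dotProduct_comm (star c),
    dotProduct_comm (star a), ha, hc, hca]
  ring

theorem of_cross_mem_specialUnitaryGroup {a c : Fin 3 → R} (ha : a ⬝ᵥ star a = 1)
    (hc : c ⬝ᵥ star c = 1) (hac : a ⬝ᵥ star c = 0) :
    of ![a, c, star (a ⨯₃ c)] ∈ specialUnitaryGroup (Fin 3) R := by
  have hca : c ⬝ᵥ star a = 0 := by rw [dotProduct_star, hac, star_zero]
  have hx := star_cross_dotProduct_cross ha hc hac
  refine ⟨mem_unitaryGroup_iff.2 ?_, ?_⟩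
  · ext i j
    have hrow : (of ![a, c, star (a ⨯₃ c)] * star (of ![a, c, star (a ⨯₃ c)])) i j =
        ![a, c, star (a ⨯₃ c)] i ⬝ᵥ star (![a, c, star (a ⨯₃ c)] j) := rfl
    rw [hrow]
    fin_cases i <;> fin_cases j <;>
      simp [ha, hc, hac, hca, hx, dot_self_cross, dot_cross_self, star_dotProduct_star]
  · change det ![a, c, star (a ⨯₃ c)] = 1
    rw [← triple_product_eq_det, triple_product_permutation, triple_product_permutation, hx]

theorem of_cross_of_mem_specialUnitaryGroup {U : Matrix (Fin 3) (Fin 3) R}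
    (hU : U ∈ specialUnitaryGroup (Fin 3) R) : of ![U 0, U 1, star (U 0 ⨯₃ U 1)] = U := by
  obtain ⟨hunit, hdet⟩ := mem_specialUnitaryGroup_iff.1 hU
  have hadj : adjugate U = star U := by
    rw [← mul_one (adjugate U), ← mem_unitaryGroup_iff.1 hunit, ← Matrix.mul_assoc,
      adjugate_mul, hdet, one_smul, Matrix.one_mul]
  have hrow2 : U 0 ⨯₃ U 1 = star (U 2) := by
    ext k
    have := congrFun (congrFun hadj k) 2
    rw [adjugate_fin_three] at this
    fin_cases k <;>
      simp only [Fin.isValue, Fin.zero_eta, Fin.mk_one, Fin.reduceFinMk, of_apply, cons_val',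
        cons_val, cons_val_fin_one, cons_val_zero, cons_val_one, star_apply, cross_apply,
        Pi.star_apply] at this ⊢ <;>
      linear_combination this
  ext i j
  fin_cases i <;> simp [hrow2]

theorem row_dotProduct_star_row {n : Type*} [Fintype n] [DecidableEq n] {U : Matrix n n R}
    (hU : U ∈ unitaryGroup n R) (i j : n) :
    U i ⬝ᵥ star (U j) = (1 : Matrix n n R) i j :=
  congrFun (congrFun (mem_unitaryGroup_iff.1 hU) i) j

end Matrix

theorem EuclideanSpace.norm_eq_one_iff {𝕜 n : Type*} [RCLike 𝕜] [Fintype n]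
    (x : EuclideanSpace 𝕜 n) : ‖x‖ = 1 ↔ ofLp x ⬝ᵥ star (ofLp x) = 1 := by
  rw [← EuclideanSpace.inner_eq_star_dotProduct, inner_self_eq_norm_sq_to_K]
  norm_cast
  exact (pow_eq_one_iff_of_nonneg (norm_nonneg x) two_ne_zero).symm

theorem dotProd_comm (z w : C3) : dotProd z w = dotProd w z := by
  simp only [dotProd, mul_comm]

theorem dotProd_smul_smul (a b : ℝ) (z w : C3) :
    dotProd (a • z) (b • w) = (a * b : ℂ) * dotProd z w := by
  simp only [dotProd, Finset.mul_sum, PiLp.smul_apply, Complex.real_smul]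
  exact Finset.sum_congr rfl fun _ _ => by ring

def unitPairs : Set (C3 × C3) := {p | ‖p.1‖ = 1 ∧ ‖p.2‖ = 1 ∧ dotProd p.1 p.2 = 0}

/-- Conjugating the second row turns Hermitian orthogonality of rows into `dotProd z w = 0`. -/
def rowPair (U : Matrix (Fin 3) (Fin 3) ℂ) : C3 × C3 := (toLp 2 (U 0), toLp 2 (star (U 1)))

theorem rowPair_mem {U : Matrix (Fin 3) (Fin 3) ℂ} (hU : U ∈ SU3) : rowPair U ∈ unitPairs := by
  have hU := (mem_specialUnitaryGroup_iff.1 hU).1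
  refine ⟨?_, ?_, ?_⟩
  · simpa [rowPair, EuclideanSpace.norm_eq_one_iff] using row_dotProduct_star_row hU 0 0
  · simpa [rowPair, EuclideanSpace.norm_eq_one_iff, dotProduct_comm]
      using row_dotProduct_star_row hU 1 1
  · exact row_dotProduct_star_row hU 0 1

def frameMatrix (p : C3 × C3) : Matrix (Fin 3) (Fin 3) ℂ :=
  of ![ofLp p.1, star (ofLp p.2), star (ofLp p.1 ⨯₃ star (ofLp p.2))]

theorem frameMatrix_mem {p : C3 × C3} (hp : p ∈ unitPairs) : frameMatrix p ∈ SU3 := by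
  obtain ⟨h1, h2, h12⟩ := hp
  rw [EuclideanSpace.norm_eq_one_iff] at h1 h2
  refine of_cross_mem_specialUnitaryGroup h1 ?_ ?_
  · rwa [star_star, dotProduct_comm]
  · rwa [star_star]

def su3HomeomorphUnitPairs : SU3 ≃ₜ unitPairs where
  toFun U := ⟨rowPair U, rowPair_mem U.2⟩
  invFun p := ⟨frameMatrix p, frameMatrix_mem p.2⟩
  left_inv U := Subtype.ext <| by
    simpa [rowPair, frameMatrix] using of_cross_of_mem_specialUnitaryGroup U.2
  right_inv p := by ext <;> simp [rowPair, frameMatrix]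
  continuous_toFun :=
    have hrow (i : Fin 3) : Continuous fun U : SU3 => (U : Matrix (Fin 3) (Fin 3) ℂ) i :=
      (continuous_apply i).comp continuous_subtype_val
    (((PiLp.continuous_toLp 2 _).comp (hrow 0)).prodMk
      ((PiLp.continuous_toLp 2 _).comp (hrow 1).star)).subtype_mk _
  continuous_invFun := by
    unfold frameMatrix; exact Continuous.subtype_mk (by fun_prop) _

section Normalize

variable {E : Type*} [NormedAddCommGroup E] [NormedSpace ℝ E]

theorem norm_sqrt_smul_sq {t : ℝ} (ht : 0 ≤ t) {u : E} (hu : ‖u‖ = 1) : ‖√t • u‖ ^ 2 = t := by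
  rw [norm_smul, hu, mul_one, Real.norm_of_nonneg (Real.sqrt_nonneg t), Real.sq_sqrt ht]

theorem inv_norm_smul_sqrt_smul {t : ℝ} (ht : 0 < t) {u : E} (hu : ‖u‖ = 1) :
    ‖√t • u‖⁻¹ • √t • u = u := by
  rw [norm_smul, hu, mul_one, Real.norm_of_nonneg (Real.sqrt_nonneg t),
    inv_smul_smul₀ (Real.sqrt_pos.2 ht).ne']

end Normalize

theorem normalize_mem_unitPairs {z w : C3} (hz : z ≠ 0) (hw : w ≠ 0) (h : dotProd z w = 0) :
    (‖z‖⁻¹ • z, ‖w‖⁻¹ • w) ∈ unitPairs :=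
  ⟨norm_smul_inv_norm hz, norm_smul_inv_norm hw, by rw [dotProd_smul_smul, h, mul_zero]⟩

theorem sqrt_smul_mem_spaceWX {ε t : ℝ} (ht0 : 0 < t) (htε : t < ε) (hε : ε < 1 / 2)
    {p : C3 × C3} (hp : p ∈ unitPairs) : (√t • p.1, √(1 - t) • p.2) ∈ spaceWX ε := by
  obtain ⟨h1, h2, h12⟩ := hp
  have hn1 := norm_sqrt_smul_sq ht0.le h1
  have hn2 := norm_sqrt_smul_sq (sub_nonneg.2 (by linarith : t ≤ 1)) h2
  refine ⟨fun (h : √t • p.1 = 0) => ?_, fun (h : √(1 - t) • p.2 = 0) => ?_,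
    by rw [dotProd_smul_smul, h12, mul_zero], ?_, .inl ?_⟩
  · rw [h, norm_zero] at hn1; linarith
  · rw [h, norm_zero] at hn2; linarith
  · dsimp only; rw [hn1, hn2]; ring
  · dsimp only; rwa [hn1]

def spaceWXFstSmall (ε : ℝ) : Set (spaceWX ε) := {p | ‖(p : C3 × C3).1‖ ^ 2 < ε}

theorem snd_small_iff_not_fst_small {ε : ℝ} (hε : ε < 1 / 2) (p : spaceWX ε) :
    ‖(p : C3 × C3).2‖ ^ 2 < ε ↔ ¬ ‖(p : C3 × C3).1‖ ^ 2 < ε := by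
  obtain ⟨-, -, -, hsum, hsmall⟩ := p.2
  exact ⟨fun h2 h1 => by linarith, hsmall.resolve_left⟩

theorem isClopen_spaceWXFstSmall {ε : ℝ} (hε : ε < 1 / 2) : IsClopen (spaceWXFstSmall ε) := by
  have hcont (f : C3 × C3 → C3) (hf : Continuous f) :
      Continuous fun p : spaceWX ε => ‖f p‖ ^ 2 := by fun_prop
  refine ⟨?_, isOpen_lt (hcont _ continuous_fst) continuous_const⟩
  have : spaceWXFstSmall ε = {p : spaceWX ε | ‖(p : C3 × C3).2‖ ^ 2 < ε}ᶜ := by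
    ext p; simp [spaceWXFstSmall, snd_small_iff_not_fst_small hε]
  rw [this, isClosed_compl_iff]
  exact isOpen_lt (hcont _ continuous_snd) continuous_const

def spaceWXFstSmallHomeomorph {ε : ℝ} (hε : ε < 1 / 2) :
    spaceWXFstSmall ε ≃ₜ Set.Ioo 0 ε × unitPairs where
  toFun p := (⟨‖p.1.1.1‖ ^ 2, by have := p.1.2.1; positivity, p.2⟩,
    ⟨(‖p.1.1.1‖⁻¹ • p.1.1.1, ‖p.1.1.2‖⁻¹ • p.1.1.2),
      normalize_mem_unitPairs p.1.2.1 p.1.2.2.1 p.1.2.2.2.1⟩)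
  invFun q := ⟨⟨(√q.1 • q.2.1.1, √(1 - q.1) • q.2.1.2),
      sqrt_smul_mem_spaceWX q.1.2.1 q.1.2.2 hε q.2.2⟩,
    by simpa [spaceWXFstSmall, norm_sqrt_smul_sq q.1.2.1.le q.2.2.1] using q.1.2.2⟩
  left_inv p := by
    obtain ⟨⟨⟨z, w⟩, hz, hw, -, hsum, -⟩, -⟩ := p
    have hw' : 1 - ‖z‖ ^ 2 = ‖w‖ ^ 2 := by linarith
    ext1; ext1
    simp only [hw', Real.sqrt_sq (norm_nonneg _), smul_inv_smul₀ (norm_ne_zero_iff.2 hz),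
      smul_inv_smul₀ (norm_ne_zero_iff.2 hw)]
  right_inv q := by
    obtain ⟨⟨t, ht0, -⟩, ⟨⟨u, v⟩, hu, hv, -⟩⟩ := q
    simp only [norm_sqrt_smul_sq ht0.le hu, inv_norm_smul_sqrt_smul ht0 hu,
      inv_norm_smul_sqrt_smul (by linarith : 0 < 1 - t) hv]
  continuous_toFun := by
    have hz : Continuous fun p : spaceWXFstSmall ε => p.1.1.1 := by fun_prop
    have hw : Continuous fun p : spaceWXFstSmall ε => p.1.1.2 := by fun_prop
    refine (hz.norm.pow 2).subtype_mk _ |>.prodMk <| Continuous.subtype_mk ?_ _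
    exact ((hz.norm.inv₀ fun p => norm_ne_zero_iff.2 p.1.2.1).smul hz).prodMk
      ((hw.norm.inv₀ fun p => norm_ne_zero_iff.2 p.1.2.2.1).smul hw)
  continuous_invFun := by fun_prop

def spaceWXSwap (ε : ℝ) : spaceWX ε ≃ₜ spaceWX ε :=
  have swap_mem (p : spaceWX ε) : (p : C3 × C3).swap ∈ spaceWX ε := by
    obtain ⟨hz, hw, hdot, hsum, hsmall⟩ := p.2
    refine ⟨hw, hz, dotProd_comm _ _ ▸ hdot, ?_, hsmall.symm⟩
    simp only [Prod.fst_swap, Prod.snd_swap]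
    linarith
  { toFun p := ⟨_, swap_mem p⟩
    invFun p := ⟨_, swap_mem p⟩
    left_inv _ := rfl
    right_inv _ := rfl }

def spaceWXFstSmallComplHomeomorph {ε : ℝ} (hε : ε < 1 / 2) :
    ((spaceWXFstSmall ε)ᶜ : Set (spaceWX ε)) ≃ₜ spaceWXFstSmall ε :=
  (spaceWXSwap ε).subtype fun p => (snd_small_iff_not_fst_small hε p).symm

end

theorem WX_homotopyEquiv_two_SU3 (ε : ℝ) (hε0 : 0 < ε) (hε1 : ε < 1 / 2) :
    Nonempty (ContinuousMap.HomotopyEquiv (spaceWX ε) (SU3 ⊕ SU3)) := by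
  classical
  have := (convex_Ioo 0 ε).contractibleSpace (Set.nonempty_Ioo.2 hε0)
  let polar := spaceWXFstSmallHomeomorph hε1
  let frame := su3HomeomorphUnitPairs.symm
  exact Homeomorph.nonempty_homotopyEquiv_of_prod_contractible <|
    (Homeomorph.sumComplOfIsClopen (isClopen_spaceWXFstSmall hε1)).symm.trans <|
    (Homeomorph.sumCongr (.refl _) (spaceWXFstSmallComplHomeomorph hε1)).trans <|
    (Homeomorph.sumCongr polar polar).trans <|
    (Homeomorph.prodSumDistrib ..).symm.trans <|
    Homeomorph.prodCongr (.refl _) (Homeomorph.sumCongr frame frame)
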